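/- arXiv:2303.13485 — 2 statements merged into one kernel-verified Lean document; each statement's English description precedes it below -/
import Mathlib

section
/- For Ỹ ~ Erlang(K, μ), θ > 0, and threshold waiting policy w(y) = (τ - y)⁺, the Laplace-type functional L(τ) = E[e^{-2θ(w(Ỹ)+Ỹ)}] equals e^{-2θτ}·γ(μτ, K) + (μ/(μ+2θ))^K · (1 - γ((2θ+μ)τ, K)). -/
/-!
On `[0, τ]` the factor `exp (-2θ · max τ y)` is the constant `exp (-2θτ)`, leaving the Erlang(K, μ)
mass of `[0, τ]`, which is `γ(μτ, K)`. Beyond `τ` it combines with the density into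
`(μ / (μ + 2θ))^K` times the Erlang(K, μ + 2θ) density, whose mass on `(τ, ∞)` is
`1 - γ((μ + 2θ)τ, K)`. Both masses come from `∫₀^∞ yⁿ e^{-cy} dy = n! / c^{n+1}` and the
substitution `t = c y`.
-/

open Real MeasureTheory

/-- The regularized lower incomplete Gamma function
`γ(x, n) = (1/(n-1)!) ∫₀ˣ t^{n-1} e^{-t} dt`. -/
noncomputable def regGamma (x : ℝ) (n : ℕ) : ℝ :=
  (1 / ((n - 1).factorial : ℝ)) * ∫ t in (0 : ℝ)..x, t ^ (n - 1) * Real.exp (-t)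

open Set

theorem integrableOn_pow_mul_exp_neg_mul_Ioi (n : ℕ) {c : ℝ} (hc : 0 < c) :
    IntegrableOn (fun y : ℝ => y ^ n * exp (-(c * y))) (Ioi 0) := by
  have hn : (-1 : ℝ) < n := by linarith [n.cast_nonneg (α := ℝ)]
  refine (integrableOn_rpow_mul_exp_neg_mul_rpow hn one_pos hc).congr_fun (fun y _ => ?_)
    measurableSet_Ioi
  simp only [rpow_natCast, rpow_one, neg_mul]

theorem integral_pow_mul_exp_neg_mul_Ioi (n : ℕ) {c : ℝ} (hc : 0 < c) :
    ∫ y in Ioi (0 : ℝ), y ^ n * exp (-(c * y)) = (n.factorial : ℝ) / c ^ (n + 1) := by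
  have h := integral_rpow_mul_exp_neg_mul_Ioi (a := n + 1) (by positivity) hc
  rw [Gamma_nat_eq_factorial, add_sub_cancel_right, ← Nat.cast_succ] at h
  simp only [rpow_natCast] at h
  rw [h, one_div, inv_pow, div_eq_inv_mul, Nat.succ_eq_add_one]

theorem intervalIntegral_pow_mul_exp_neg_mul (n : ℕ) {c : ℝ} (hc : 0 < c) (x : ℝ) :
    ∫ y in (0 : ℝ)..x, y ^ n * exp (-(c * y))
      = (n.factorial : ℝ) / c ^ (n + 1) * regGamma (c * x) (n + 1) := by
  have h := intervalIntegral.integral_comp_mul_left (a := 0) (b := x)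
    (fun t => t ^ n * exp (-t)) hc.ne'
  simp only [mul_zero, mul_pow, smul_eq_mul, mul_assoc, intervalIntegral.integral_const_mul] at h
  rw [regGamma, add_tsub_cancel_right]
  field_simp
  field_simp at h
  linear_combination h

theorem integral_Ioi_pow_mul_exp_neg_mul (n : ℕ) {c x : ℝ} (hc : 0 < c) (hx : 0 ≤ x) :
    ∫ y in Ioi x, y ^ n * exp (-(c * y))
      = (n.factorial : ℝ) / c ^ (n + 1) * (1 - regGamma (c * x) (n + 1)) := by
  have h := intervalIntegral.integral_Ioi_sub_Ioi (integrableOn_pow_mul_exp_neg_mul_Ioi n hc) hx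
  rw [integral_pow_mul_exp_neg_mul_Ioi n hc, intervalIntegral_pow_mul_exp_neg_mul n hc] at h
  linear_combination -h

/-- For `Ỹ ~ Erlang(K, μ)`, `θ > 0`, and the threshold waiting policy `w(y) = (τ - y)⁺`
(so that `w(Ỹ) + Ỹ = max τ Ỹ`), the Laplace-type functional
`L(τ) = E[e^{-2θ(w(Ỹ)+Ỹ)}]` equals
`e^{-2θτ} γ(μτ, K) + (μ/(μ+2θ))^K (1 - γ((2θ+μ)τ, K))`. -/
theorem laplace_functional_erlang (K : ℕ) (hK : 1 ≤ K) (μ θ : ℝ) (hμ : 0 < μ) (hθ : 0 < θ)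
    (τ : ℝ) (hτ : 0 ≤ τ) :
    ∫ y in Set.Ioi (0 : ℝ),
        Real.exp (-2 * θ * max τ y) *
          (μ ^ K * y ^ (K - 1) * Real.exp (-μ * y) / ((K - 1).factorial : ℝ)) =
      Real.exp (-2 * θ * τ) * regGamma (μ * τ) K +
        (μ / (μ + 2 * θ)) ^ K * (1 - regGamma ((2 * θ + μ) * τ) K) := by
  obtain ⟨n, rfl⟩ : ∃ n, K = n + 1 := ⟨K - 1, (Nat.sub_add_cancel hK).symm⟩
  simp only [add_tsub_cancel_right]
  set C := μ ^ (n + 1) / (n.factorial : ℝ) with hC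
  have hμθ : 0 < μ + 2 * θ := by positivity
  have below : ∀ y ∈ uIcc 0 τ, exp (-2 * θ * max τ y) *
      (μ ^ (n + 1) * y ^ n * exp (-μ * y) / (n.factorial : ℝ)) =
      exp (-2 * θ * τ) * C * (y ^ n * exp (-(μ * y))) := by
    intro y hy
    rw [uIcc_of_le hτ] at hy
    rw [max_eq_left hy.2, neg_mul μ]
    ring
  have above : ∀ y ∈ Ioi τ, exp (-2 * θ * max τ y) *
      (μ ^ (n + 1) * y ^ n * exp (-μ * y) / (n.factorial : ℝ)) =
      C * (y ^ n * exp (-((μ + 2 * θ) * y))) := by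
    intro y hy
    rw [max_eq_right hy.le, show -((μ + 2 * θ) * y) = -2 * θ * y + -μ * y by ring, exp_add]
    ring
  rw [← intervalIntegral.integral_interval_add_Ioi' ?_ ?_,
    intervalIntegral.integral_congr below, intervalIntegral.integral_const_mul,
    intervalIntegral_pow_mul_exp_neg_mul n hμ, setIntegral_congr_fun measurableSet_Ioi above,
    integral_const_mul, integral_Ioi_pow_mul_exp_neg_mul n hμθ hτ, add_comm (2 * θ)]
  · rw [div_pow, hC]
    field_simp
  · exact Continuous.intervalIntegrable (by fun_prop) _ _
  · refine IntegrableOn.congr_fun ?_ (fun y hy => (above y hy).symm) measurableSet_Ioi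
    exact ((integrableOn_pow_mul_exp_neg_mul_Ioi n hμθ).mono_set (Ioi_subset_Ioi hτ)).const_mul C
end

section
/- Let g̃(x) = Σ_{k=1}^K (σ_k²/(2θ_k))·(1 - c_k·(1-ε)²e^{-2θ_k x}/(1 - ε·L_k(x))²), where L_k(x) = e^{-2θ_k x}γ(μx, K) + (μ/(μ+2θ_k))^K(1 - γ((2θ_k+μ)x, K)) and c_k = μ/(μ+2θ_k). Then g̃ is strictly increasing in x on [0,∞) for every ε ∈ [0,1), θ_k, σ_k, μ > 0. -/
open Real Set Finset

/-- `L_k(x) = e^{-2θ_k x} γ(μx, K) + (μ/(μ+2θ_k))^K (1 - γ((2θ_k+μ)x, K))`. -/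
noncomputable def Lfun (K : ℕ) (μ θ x : ℝ) : ℝ :=
  Real.exp (-2 * θ * x) * regGamma (μ * x) K +
    (μ / (μ + 2 * θ)) ^ K * (1 - regGamma ((2 * θ + μ) * x) K)

/-! The derivative of `L_k` is `-2θ_k e^{-2θ_k x} γ(μx, K) ≤ 0` for `x ≥ 0`: the two
incomplete-Gamma densities cancel because `c_k^K (2θ_k + μ)^K = μ^K`. Hence `L_k` decreases from
`L_k(0) = c_k^K ≤ 1`, so `1 - ε L_k` is positive and increasing, and each
`e^{-2θ_k x} / (1 - ε L_k(x))²` strictly decreases. -/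

lemma hasDerivAt_regGamma (K : ℕ) (y : ℝ) :
    HasDerivAt (regGamma · K) (y ^ (K - 1) * exp (-y) / (K - 1).factorial) y := by
  have hc : Continuous fun t : ℝ => t ^ (K - 1) * exp (-t) := by fun_prop
  have h := intervalIntegral.integral_hasDerivAt_right (hc.intervalIntegrable 0 y)
    (hc.stronglyMeasurableAtFilter _ _) hc.continuousAt
  exact (h.const_mul (1 / ((K - 1).factorial : ℝ))).congr_deriv (by ring)

lemma regGamma_zero (K : ℕ) : regGamma 0 K = 0 := by
  simp [regGamma]

lemma regGamma_nonneg (K : ℕ) {y : ℝ} (hy : 0 ≤ y) : 0 ≤ regGamma y K :=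
  mul_nonneg (by positivity) <| intervalIntegral.integral_nonneg hy fun t ht ↦ by
    have := ht.1
    positivity

lemma hasDerivAt_Lfun {K : ℕ} (hK : 0 < K) {μ θ : ℝ} (hμθ : μ + 2 * θ ≠ 0) (x : ℝ) :
    HasDerivAt (Lfun K μ θ) (-2 * θ * exp (-2 * θ * x) * regGamma (μ * x) K) x := by
  obtain ⟨n, rfl⟩ : ∃ n, K = n + 1 := ⟨K - 1, (Nat.succ_pred_eq_of_pos hK).symm⟩
  have hE : HasDerivAt (fun x ↦ exp (-2 * θ * x)) (exp (-2 * θ * x) * (-2 * θ)) x := by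
    simpa using ((hasDerivAt_id x).const_mul (-2 * θ)).exp
  have hG : ∀ a : ℝ, HasDerivAt (fun x ↦ regGamma (a * x) (n + 1))
      ((a * x) ^ n * exp (-(a * x)) / n.factorial * a) x := fun a ↦ by
    simpa [Function.comp_def] using
      (hasDerivAt_regGamma (n + 1) (a * x)).comp x ((hasDerivAt_id x).const_mul a)
  refine ((hE.mul (hG μ)).add (((hasDerivAt_const x 1).sub (hG (2 * θ + μ))).const_mul
    ((μ / (μ + 2 * θ)) ^ (n + 1)))).congr_deriv ?_
  have hexp : exp (-2 * θ * x) * exp (-(μ * x)) = exp (-((2 * θ + μ) * x)) := by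
    rw [← exp_add]; ring_nf
  rw [← hexp, div_pow, mul_pow, mul_pow]
  field_simp
  ring

lemma antitoneOn_Lfun {K : ℕ} (hK : 0 < K) {μ θ : ℝ} (hμ : 0 < μ) (hθ : 0 ≤ θ) :
    AntitoneOn (Lfun K μ θ) (Ici 0) := by
  have hL := hasDerivAt_Lfun hK (μ := μ) (θ := θ) (by positivity)
  refine antitoneOn_of_deriv_nonpos (convex_Ici 0)
    (fun x _ ↦ (hL x).continuousAt.continuousWithinAt)
    (fun x _ ↦ (hL x).differentiableAt.differentiableWithinAt) fun x hx ↦ ?_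
  rw [interior_Ici, Set.mem_Ioi] at hx
  have hG := regGamma_nonneg K (mul_pos hμ hx).le
  rw [(hL x).deriv, neg_mul, neg_mul, neg_mul, neg_nonpos]
  positivity

lemma Lfun_zero (K : ℕ) (μ θ : ℝ) : Lfun K μ θ 0 = (μ / (μ + 2 * θ)) ^ K := by
  simp [Lfun, regGamma_zero]

lemma Lfun_le_one {K : ℕ} (hK : 0 < K) {μ θ : ℝ} (hμ : 0 < μ) (hθ : 0 ≤ θ) {x : ℝ}
    (hx : 0 ≤ x) : Lfun K μ θ x ≤ 1 :=
  calc Lfun K μ θ x ≤ Lfun K μ θ 0 := antitoneOn_Lfun hK hμ hθ self_mem_Ici hx hx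
    _ = (μ / (μ + 2 * θ)) ^ K := Lfun_zero K μ θ
    _ ≤ 1 := pow_le_one₀ (by positivity) ((div_le_one (by positivity)).2 (by linarith))

lemma StrictAntiOn.div_of_monotoneOn {α : Type*} [Preorder α] {f g : α → ℝ} {s : Set α}
    (hf : StrictAntiOn f s) (hg : MonotoneOn g s) (hf0 : ∀ x ∈ s, 0 ≤ f x)
    (hg0 : ∀ x ∈ s, 0 < g x) : StrictAntiOn (fun x ↦ f x / g x) s := fun x hx y hy hxy ↦
  calc f y / g y ≤ f y / g x := div_le_div_of_nonneg_left (hf0 y hy) (hg0 x hx) (hg hx hy hxy.le)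
    _ < f x / g x := div_lt_div_of_pos_right (hf hx hy hxy) (hg0 x hx)

lemma strictAntiOn_exp_div_one_sub_mul_Lfun_sq {K : ℕ} (hK : 0 < K) {μ θ ε : ℝ} (hμ : 0 < μ)
    (hθ : 0 < θ) (hε0 : 0 ≤ ε) (hε1 : ε < 1) :
    StrictAntiOn (fun x ↦ exp (-2 * θ * x) / (1 - ε * Lfun K μ θ x) ^ 2) (Ici 0) := by
  have hpos : ∀ x ∈ Ici (0 : ℝ), 0 < 1 - ε * Lfun K μ θ x := fun x hx ↦ by
    nlinarith [Lfun_le_one hK hμ hθ.le hx]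
  refine StrictAntiOn.div_of_monotoneOn (fun x _ y _ hxy ↦ ?_) (fun x hx y hy hxy ↦ ?_)
    (fun x _ ↦ (exp_pos _).le) (fun x hx ↦ pow_pos (hpos x hx) 2)
  · exact exp_lt_exp.2 (by nlinarith)
  · have := antitoneOn_Lfun hK hμ hθ.le hx hy hxy
    gcongr
    exact (hpos x hx).le

lemma StrictMonoOn.finset_sum {ι α M : Type*} [Preorder α] [AddCommMonoid M] [PartialOrder M]
    [IsOrderedCancelAddMonoid M] {t : Finset ι} (ht : t.Nonempty) {f : ι → α → M} {s : Set α}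
    (hf : ∀ i ∈ t, StrictMonoOn (f i) s) : StrictMonoOn (fun x ↦ ∑ i ∈ t, f i x) s :=
  fun _ hx _ hy hxy ↦ Finset.sum_lt_sum_of_nonempty ht fun i hi ↦ hf i hi hx hy hxy

/-- The function
`g̃(x) = Σ_k (σ_k²/(2θ_k)) (1 - c_k (1-ε)² e^{-2θ_k x} / (1 - ε L_k(x))²)`,
with `c_k = μ/(μ+2θ_k)`, is strictly increasing on `[0, ∞)` for every `ε ∈ [0,1)` and
`θ_k, σ_k, μ > 0`. -/
theorem g_tilde_strictMono (K : ℕ) (hK : 1 ≤ K) (μ : ℝ) (hμ : 0 < μ)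
    (ε : ℝ) (hε0 : 0 ≤ ε) (hε1 : ε < 1)
    (θ σ : Fin K → ℝ) (hθ : ∀ k, 0 < θ k) (hσ : ∀ k, 0 < σ k) :
    StrictMonoOn (fun x : ℝ =>
      ∑ k : Fin K, σ k ^ 2 / (2 * θ k) *
        (1 - (μ / (μ + 2 * θ k)) * (1 - ε) ^ 2 * Real.exp (-2 * θ k * x) /
          (1 - ε * Lfun K μ (θ k) x) ^ 2)) (Set.Ici 0) := by
  have : Nonempty (Fin K) := ⟨⟨0, hK⟩⟩
  refine StrictMonoOn.finset_sum univ_nonempty fun k _ x hx y hy hxy ↦ ?_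
  have hθk := hθ k
  have hσk := hσ k
  have := strictAntiOn_exp_div_one_sub_mul_Lfun_sq hK hμ hθk hε0 hε1 hx hy hxy
  simp only [mul_div_assoc] at this ⊢
  gcongr
end
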